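/- In the homogeneous two-study setting, the pooled consistency probability H(f₁, f₂) = (1/(1−β)²)∫_{−√2 z_{1−β}}^∞ Φ((1−π)(√2 x + 2c)/√(1/f₁ + 1/f₂ − 2))·(2Φ(x+√2 z_{1−β}) − 1)·φ(x)dx depends on (f₁, f₂) only through c' = 1/f₁ + 1/f₂ and is strictly decreasing in c'. -/

import Mathlib

/-!
With `r = (1 - π)√2 / √(c' - 2)`, `a = √2 c > 0` and `b = √2 z_{1-β}`, the integral is
`∫_{x > -b} Φ(r (x + a)) w(x) dx` with `w(x) = (2Φ(x + b) - 1) φ(x)`, and `r` is strictly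
decreasing in `c'`; so it suffices that this integral is strictly increasing in `r`.
For `r₂ < r₁` the difference `D(x) = Φ(r₁ (x + a)) - Φ(r₂ (x + a))` is odd about `-a` and
positive to its right, while `w`, extended by zero below `-b`, is larger at `y > -a` than at the
mirror image `-2a - y`: that point lies further left and further from the origin. Pairing each
point with its mirror image turns `∫ D w` into the integral of a nonnegative function that is
positive far to the right.
-/

open MeasureTheory

/-- Standard normal density. -/
noncomputable def stdNormalPdf (t : ℝ) : ℝ :=
  (Real.sqrt (2 * Real.pi))⁻¹ * Real.exp (-(t ^ 2) / 2)

/-- Standard normal cumulative distribution function. -/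
noncomputable def stdNormalCdf (x : ℝ) : ℝ := ∫ t in Set.Iic x, stdNormalPdf t

open Set ProbabilityTheory

lemma stdNormalPdf_eq_gaussianPDFReal : stdNormalPdf = gaussianPDFReal 0 1 := by
  ext t
  simp [stdNormalPdf, gaussianPDFReal]

lemma stdNormalPdf_pos (t : ℝ) : 0 < stdNormalPdf t := by
  rw [stdNormalPdf_eq_gaussianPDFReal]
  exact gaussianPDFReal_pos _ _ _ one_ne_zero

lemma integrable_stdNormalPdf : Integrable stdNormalPdf := by
  rw [stdNormalPdf_eq_gaussianPDFReal]
  exact integrable_gaussianPDFReal _ _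

lemma integral_stdNormalPdf : ∫ t, stdNormalPdf t = 1 := by
  rw [stdNormalPdf_eq_gaussianPDFReal]
  exact integral_gaussianPDFReal_eq_one _ one_ne_zero

lemma stdNormalPdf_neg (t : ℝ) : stdNormalPdf (-t) = stdNormalPdf t := by
  simp [stdNormalPdf]

lemma stdNormalPdf_le_of_sq_le {s t : ℝ} (h : t ^ 2 ≤ s ^ 2) :
    stdNormalPdf s ≤ stdNormalPdf t := by
  unfold stdNormalPdf
  gcongr

lemma stdNormalCdf_strictMono : StrictMono stdNormalCdf := by
  intro a b hab
  have hdiff : stdNormalCdf b - stdNormalCdf a = ∫ t in a..b, stdNormalPdf t :=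
    intervalIntegral.integral_Iic_sub_Iic integrable_stdNormalPdf.integrableOn
      integrable_stdNormalPdf.integrableOn
  have hpos : 0 < ∫ t in a..b, stdNormalPdf t :=
    intervalIntegral.intervalIntegral_pos_of_pos_on integrable_stdNormalPdf.intervalIntegrable
      (fun t _ => stdNormalPdf_pos t) hab
  linarith

lemma measurable_stdNormalCdf : Measurable stdNormalCdf :=
  stdNormalCdf_strictMono.monotone.measurable

lemma stdNormalCdf_nonneg (x : ℝ) : 0 ≤ stdNormalCdf x :=
  setIntegral_nonneg measurableSet_Iic fun t _ => (stdNormalPdf_pos t).le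

lemma stdNormalCdf_le_one (x : ℝ) : stdNormalCdf x ≤ 1 :=
  integral_stdNormalPdf ▸ setIntegral_le_integral integrable_stdNormalPdf
    (.of_forall fun t => (stdNormalPdf_pos t).le)

lemma stdNormalCdf_neg (x : ℝ) : stdNormalCdf (-x) = 1 - stdNormalCdf x := by
  have hIoi : stdNormalCdf (-x) = ∫ t in Ioi x, stdNormalPdf t := by
    rw [stdNormalCdf, ← integral_comp_neg_Ioi]
    simp only [stdNormalPdf_neg]
  have hsplit := intervalIntegral.integral_Iic_add_Ioi (b := x)
    integrable_stdNormalPdf.integrableOn integrable_stdNormalPdf.integrableOn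
  rw [integral_stdNormalPdf] at hsplit
  rw [hIoi, stdNormalCdf]
  linarith

lemma stdNormalCdf_zero : stdNormalCdf 0 = 1 / 2 := by
  linarith [neg_zero (G := ℝ) ▸ stdNormalCdf_neg 0]

lemma half_lt_stdNormalCdf {x : ℝ} (hx : 0 < x) : 1 / 2 < stdNormalCdf x :=
  stdNormalCdf_zero ▸ stdNormalCdf_strictMono hx

lemma integral_pos_of_add_reflect {G : ℝ → ℝ} (hG : Integrable G) {a b : ℝ}
    (hnonneg : ∀ y, a ≤ y → 0 ≤ G y + G (2 * a - y))
    (hpos : ∀ y, b < y → 0 < G y + G (2 * a - y)) : 0 < ∫ x, G x := by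
  set S : ℝ → ℝ := fun x => G x + G (2 * a - x) with hS
  have hS_nonneg : 0 ≤ S := by
    intro x
    rcases le_total a x with hx | hx
    · exact hnonneg x hx
    · simpa [hS, add_comm] using hnonneg (2 * a - x) (by linarith)
  have hS_int : Integrable S := hG.add (hG.comp_sub_left (2 * a))
  have hS_integral : ∫ x, S x = 2 * ∫ x, G x := by
    rw [integral_add hG (hG.comp_sub_left _), integral_sub_left_eq_self]
    ring
  have hS_pos : 0 < ∫ x, S x := by
    rw [integral_pos_iff_support_of_nonneg hS_nonneg hS_int]
    calc (0 : ENNReal) < volume (Ioi b) := by simp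
      _ ≤ volume (Function.support S) := measure_mono fun y hy => (hpos y hy).ne'
  linarith

noncomputable def consistencyWeight (b : ℝ) : ℝ → ℝ :=
  (Ioi (-b)).indicator fun x => (2 * stdNormalCdf (x + b) - 1) * stdNormalPdf x

lemma integrable_consistencyWeight (b : ℝ) : Integrable (consistencyWeight b) := by
  refine (integrable_stdNormalPdf.bdd_mul (c := 1) ?_ (.of_forall fun x => ?_)).indicator
    measurableSet_Ioi
  · exact ((measurable_stdNormalCdf.comp (measurable_add_const b)).const_mul 2).sub_const 1
      |>.aestronglyMeasurable
  · have := stdNormalCdf_nonneg (x + b)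
    have := stdNormalCdf_le_one (x + b)
    rw [Real.norm_eq_abs, abs_le]
    constructor <;> linarith

lemma consistencyWeight_nonneg (b x : ℝ) : 0 ≤ consistencyWeight b x := by
  refine indicator_nonneg (fun x hx => mul_nonneg ?_ (stdNormalPdf_pos x).le) x
  linarith [half_lt_stdNormalCdf (show 0 < x + b by linarith [mem_Ioi.1 hx])]

lemma consistencyWeight_lt {b y' y : ℝ} (hlt : y' < y) (hsum : y' + y ≤ 0) (hy : -b < y) :
    consistencyWeight b y' < consistencyWeight b y := by
  have hfactor_lt : 2 * stdNormalCdf (y' + b) - 1 < 2 * stdNormalCdf (y + b) - 1 := by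
    linarith [stdNormalCdf_strictMono (show y' + b < y + b by linarith)]
  have hy_pos : 0 < 2 * stdNormalCdf (y + b) - 1 := by
    linarith [half_lt_stdNormalCdf (show 0 < y + b by linarith)]
  have hw_pos := mul_pos hy_pos (stdNormalPdf_pos y)
  rw [consistencyWeight, indicator_of_mem (show y ∈ Ioi (-b) from hy)]
  by_cases hy' : y' ∈ Ioi (-b)
  · rw [indicator_of_mem hy']
    have hfactor_pos : 0 < 2 * stdNormalCdf (y' + b) - 1 := by
      linarith [half_lt_stdNormalCdf (show 0 < y' + b by linarith [mem_Ioi.1 hy'])]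
    -- `|y| ≤ |y'|` because `y' < y` and `y' + y ≤ 0`
    have hpdf : stdNormalPdf y' ≤ stdNormalPdf y :=
      stdNormalPdf_le_of_sq_le (by nlinarith)
    calc (2 * stdNormalCdf (y' + b) - 1) * stdNormalPdf y'
        ≤ (2 * stdNormalCdf (y' + b) - 1) * stdNormalPdf y := by gcongr
      _ < (2 * stdNormalCdf (y + b) - 1) * stdNormalPdf y := by
        gcongr
        exact stdNormalPdf_pos y
  · rwa [indicator_of_notMem hy']

lemma consistencyWeight_le {b y' y : ℝ} (hle : y' ≤ y) (hsum : y' + y ≤ 0) :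
    consistencyWeight b y' ≤ consistencyWeight b y := by
  rcases hle.eq_or_lt with rfl | hlt
  · rfl
  rcases le_or_gt y (-b) with hy | hy
  · rw [consistencyWeight, indicator_of_notMem (show y' ∉ Ioi (-b) from fun h => by
      linarith [mem_Ioi.1 h])]
    exact consistencyWeight_nonneg b y
  · exact (consistencyWeight_lt hlt hsum hy).le

noncomputable def pooledIntegral (r a b : ℝ) : ℝ :=
  ∫ x in Ioi (-b), stdNormalCdf (r * (x + a)) * (2 * stdNormalCdf (x + b) - 1) * stdNormalPdf x

lemma pooledIntegral_eq_integral_mul_consistencyWeight (r a b : ℝ) :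
    pooledIntegral r a b = ∫ x, stdNormalCdf (r * (x + a)) * consistencyWeight b x := by
  rw [pooledIntegral, ← integral_indicator measurableSet_Ioi]
  congr 1 with x
  rw [consistencyWeight, ← indicator_mul_right _ fun x => stdNormalCdf (r * (x + a))]
  simp only [mul_assoc]

lemma integrable_stdNormalCdf_mul_consistencyWeight (r a b : ℝ) :
    Integrable fun x => stdNormalCdf (r * (x + a)) * consistencyWeight b x := by
  refine (integrable_consistencyWeight b).bdd_mul (c := 1) ?_ (.of_forall fun x => ?_)
  · exact (measurable_stdNormalCdf.comp (by fun_prop)).aestronglyMeasurable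
  · rw [Real.norm_eq_abs, abs_of_nonneg (stdNormalCdf_nonneg _)]
    exact stdNormalCdf_le_one _

theorem pooledIntegral_strictMono {a : ℝ} (ha : 0 < a) (b : ℝ) :
    StrictMono fun r => pooledIntegral r a b := by
  intro r₂ r₁ hr
  set D : ℝ → ℝ := fun x => stdNormalCdf (r₁ * (x + a)) - stdNormalCdf (r₂ * (x + a))
    with hD
  have hD_pos : ∀ y, -a < y → 0 < D y := fun y hy =>
    sub_pos.2 (stdNormalCdf_strictMono (by nlinarith))
  have hD_nonneg : ∀ y, -a ≤ y → 0 ≤ D y := by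
    intro y hy
    rcases hy.eq_or_lt with rfl | hy
    · simp [hD]
    · exact (hD_pos y hy).le
  have hpair : ∀ y,
      D y * consistencyWeight b y + D (2 * -a - y) * consistencyWeight b (2 * -a - y)
        = D y * (consistencyWeight b y - consistencyWeight b (2 * -a - y)) := by
    intro y
    have hodd : D (2 * -a - y) = -D y := by
      simp only [hD, show ∀ r, r * (2 * -a - y + a) = -(r * (y + a)) from fun r => by ring,
        stdNormalCdf_neg]
      ring
    rw [hodd]
    ring
  have hdiff : pooledIntegral r₁ a b - pooledIntegral r₂ a b
      = ∫ x, D x * consistencyWeight b x := by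
    simp only [pooledIntegral_eq_integral_mul_consistencyWeight, hD, sub_mul]
    exact (integral_sub (integrable_stdNormalCdf_mul_consistencyWeight _ _ _)
      (integrable_stdNormalCdf_mul_consistencyWeight _ _ _)).symm
  have hint : Integrable fun x => D x * consistencyWeight b x := by
    refine ((integrable_stdNormalCdf_mul_consistencyWeight r₁ a b).sub
      (integrable_stdNormalCdf_mul_consistencyWeight r₂ a b)).congr (.of_forall fun x => ?_)
    simp only [Pi.sub_apply, hD, sub_mul]
  rw [← sub_pos, hdiff]
  refine integral_pos_of_add_reflect hint (a := -a) (b := max (-a) (-b)) (fun y hy => ?_)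
    (fun y hy => ?_) <;> rw [hpair]
  · exact mul_nonneg (hD_nonneg y hy)
      (sub_nonneg.2 (consistencyWeight_le (by linarith) (by linarith)))
  · obtain ⟨hya, hyb⟩ := max_lt_iff.1 hy
    exact mul_pos (hD_pos y hya)
      (sub_pos.2 (consistencyWeight_lt (by linarith) (by linarith) hyb))

theorem stmt11_general (π β zβ : ℝ)
    (hπ : π ∈ Set.Ioo (0 : ℝ) 1) (hβ : β ∈ Set.Ioo (0 : ℝ) 1)
    (c : ℝ) (hcpos : 0 < c)
    (H : ℝ → ℝ → ℝ)
    (hH : ∀ f1 f2 : ℝ, H f1 f2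
      = (1 / (1 - β) ^ 2) * ∫ x in Set.Ioi (-(Real.sqrt 2 * zβ)),
          stdNormalCdf ((1 - π) * (Real.sqrt 2 * x + 2 * c)
              / Real.sqrt (1 / f1 + 1 / f2 - 2))
            * (2 * stdNormalCdf (x + Real.sqrt 2 * zβ) - 1) * stdNormalPdf x) :
    (∀ f1 f2 g1 g2 : ℝ, f1 ∈ Set.Ioo (0:ℝ) 1 → f2 ∈ Set.Ioo (0:ℝ) 1 →
        g1 ∈ Set.Ioo (0:ℝ) 1 → g2 ∈ Set.Ioo (0:ℝ) 1 →
        1 / f1 + 1 / f2 = 1 / g1 + 1 / g2 → H f1 f2 = H g1 g2)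
    ∧ (∀ f1 f2 g1 g2 : ℝ, f1 ∈ Set.Ioo (0:ℝ) 1 → f2 ∈ Set.Ioo (0:ℝ) 1 →
        g1 ∈ Set.Ioo (0:ℝ) 1 → g2 ∈ Set.Ioo (0:ℝ) 1 →
        1 / f1 + 1 / f2 < 1 / g1 + 1 / g2 → H g1 g2 < H f1 f2) := by
  have hH_pooled : ∀ f1 f2, H f1 f2 = 1 / (1 - β) ^ 2 *
      pooledIntegral ((1 - π) * √2 / √(1 / f1 + 1 / f2 - 2)) (√2 * c) (√2 * zβ) := by
    intro f1 f2
    rw [hH, pooledIntegral]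
    congr 3 with x
    congr 3
    have h2 : √2 * √2 = 2 := Real.mul_self_sqrt zero_le_two
    linear_combination (π - 1) * c / √(1 / f1 + 1 / f2 - 2) * h2
  refine ⟨fun f1 f2 g1 g2 _ _ _ _ h => by rw [hH_pooled, hH_pooled, h], ?_⟩
  intro f1 f2 g1 g2 hf1 hf2 hg1 hg2 hlt
  have hf : 2 < 1 / f1 + 1 / f2 := by
    linarith [one_lt_one_div hf1.1 hf1.2, one_lt_one_div hf2.1 hf2.2]
  have hrate :
      (1 - π) * √2 / √(1 / g1 + 1 / g2 - 2) < (1 - π) * √2 / √(1 / f1 + 1 / f2 - 2) :=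
    div_lt_div_of_pos_left (mul_pos (sub_pos.2 hπ.2) (by positivity))
      (Real.sqrt_pos.2 (by linarith)) (Real.sqrt_lt_sqrt (by linarith) (by linarith))
  rw [hH_pooled, hH_pooled]
  exact mul_lt_mul_of_pos_left (pooledIntegral_strictMono (by positivity) _ hrate)
    (one_div_pos.2 (pow_pos (sub_pos.2 hβ.2) 2))

/-- In the homogeneous two-study setting, the pooled criterion-I consistency probability
`H(f₁, f₂)` depends on `(f₁, f₂)` only through `c' = 1/f₁ + 1/f₂` and is strictly
decreasing in `c'`. -/
theorem stmt11 (π α β zα zβ : ℝ)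
    (hπ : π ∈ Set.Ioo (0 : ℝ) 1) (hα : α ∈ Set.Ioo (0 : ℝ) 1) (hβ : β ∈ Set.Ioo (0 : ℝ) 1)
    (hzα : stdNormalCdf zα = 1 - α) (hzβ : stdNormalCdf zβ = 1 - β)
    (c : ℝ) (hc : c = zα + zβ) (hcpos : 0 < c)
    (H : ℝ → ℝ → ℝ)
    (hH : ∀ f1 f2 : ℝ, H f1 f2
      = (1 / (1 - β) ^ 2) * ∫ x in Set.Ioi (-(Real.sqrt 2 * zβ)),
          stdNormalCdf ((1 - π) * (Real.sqrt 2 * x + 2 * c)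
              / Real.sqrt (1 / f1 + 1 / f2 - 2))
            * (2 * stdNormalCdf (x + Real.sqrt 2 * zβ) - 1) * stdNormalPdf x) :
    (∀ f1 f2 g1 g2 : ℝ, f1 ∈ Set.Ioo (0:ℝ) 1 → f2 ∈ Set.Ioo (0:ℝ) 1 →
        g1 ∈ Set.Ioo (0:ℝ) 1 → g2 ∈ Set.Ioo (0:ℝ) 1 →
        1 / f1 + 1 / f2 = 1 / g1 + 1 / g2 → H f1 f2 = H g1 g2)
    ∧ (∀ f1 f2 g1 g2 : ℝ, f1 ∈ Set.Ioo (0:ℝ) 1 → f2 ∈ Set.Ioo (0:ℝ) 1 →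
        g1 ∈ Set.Ioo (0:ℝ) 1 → g2 ∈ Set.Ioo (0:ℝ) 1 →
        1 / f1 + 1 / f2 < 1 / g1 + 1 / g2 → H g1 g2 < H f1 f2) :=
  stmt11_general π β zβ hπ hβ c hcpos H hH
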